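/- arXiv:1811.08607 — 4 statements merged into one kernel-verified Lean document; each statement's English description precedes it below -/
import Mathlib

section
/- For any finite group G and any integer k ≥ 2, the number c_G(k) of simultaneous conjugacy classes of k-tuples of pairwise commuting elements of G satisfies c_G(k) = ∑_{i=1}^{l} c_{Z_G(g_i)}(k-1), where g_1,…,g_l are representatives of the conjugacy classes of G, Z_G(g_i) denotes the centralizer of g_i, and c_{Z_G(g_i)}(k-1) is the number of orbits of Z_G(g_i) acting by simultaneous conjugation on (k-1)-tuples of pairwise commuting elements of Z_G(g_i). -/
/-- The number of orbits of a group `G` acting by simultaneous conjugation on the set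
of `m`-tuples of pairwise commuting elements of `G`. -/
noncomputable def commClassCount (G : Type*) [Group G] (m : ℕ) : ℕ :=
  Nat.card (Quot (fun v w : {v : Fin m → G // ∀ i j, Commute (v i) (v j)} =>
    ∃ g : G, ∀ i, g * v.1 i * g⁻¹ = w.1 i))

section Aux

variable {G : Type*} [Group G]

abbrev CTup (G : Type*) [Group G] (m : ℕ) := {v : Fin m → G // ∀ i j, Commute (v i) (v j)}

abbrev CRel (G : Type*) [Group G] (m : ℕ) : CTup G m → CTup G m → Prop :=
  fun v w => ∃ g : G, ∀ i, g * v.1 i * g⁻¹ = w.1 i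

theorem conj_commute {h x y : G} (hc : Commute x y) :
    Commute (h * x * h⁻¹) (h * y * h⁻¹) := by
  show _ = _
  calc (h * x * h⁻¹) * (h * y * h⁻¹) = h * (x * y) * h⁻¹ := by group
    _ = h * (y * x) * h⁻¹ := by rw [hc.eq]
    _ = (h * y * h⁻¹) * (h * x * h⁻¹) := by group

def normTup {m : ℕ} (a : G) (h : G) (v : CTup G (m + 1)) (hv : h * v.1 0 * h⁻¹ = a) :
    CTup (Subgroup.centralizer {a}) m := by
  refine ⟨fun j => ⟨h * v.1 j.succ * h⁻¹, ?_⟩, ?_⟩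
  · rw [Subgroup.mem_centralizer_singleton_iff]
    have hc : Commute (h * v.1 j.succ * h⁻¹) (h * v.1 0 * h⁻¹) :=
      conj_commute (v.2 j.succ 0)
    rw [hv] at hc
    exact hc.eq
  · intro i j
    refine Subtype.ext ?_
    exact (conj_commute (v.2 i.succ j.succ)).eq

theorem normTup_indep {m : ℕ} (a : G) (h₁ h₂ : G) (v₁ v₂ : CTup G (m + 1))
    (hv₁ : h₁ * v₁.1 0 * h₁⁻¹ = a) (hv₂ : h₂ * v₂.1 0 * h₂⁻¹ = a)
    (hr : CRel G (m + 1) v₁ v₂) :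
    Quot.mk (CRel _ m) (normTup a h₁ v₁ hv₁) = Quot.mk (CRel _ m) (normTup a h₂ v₂ hv₂) := by
  obtain ⟨c, hc⟩ := hr
  apply Quot.sound
  have key : (h₂ * c * h₁⁻¹) * a * (h₂ * c * h₁⁻¹)⁻¹ = a := by
    calc (h₂ * c * h₁⁻¹) * a * (h₂ * c * h₁⁻¹)⁻¹
        = (h₂ * c * h₁⁻¹) * (h₁ * v₁.1 0 * h₁⁻¹) * (h₂ * c * h₁⁻¹)⁻¹ := by rw [hv₁]
      _ = h₂ * (c * v₁.1 0 * c⁻¹) * h₂⁻¹ := by group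
      _ = h₂ * v₂.1 0 * h₂⁻¹ := by rw [hc 0]
      _ = a := hv₂
  have hmem : h₂ * c * h₁⁻¹ ∈ Subgroup.centralizer ({a} : Set G) := by
    rw [Subgroup.mem_centralizer_singleton_iff]
    calc (h₂ * c * h₁⁻¹) * a = (h₂ * c * h₁⁻¹) * a * (h₂ * c * h₁⁻¹)⁻¹ * (h₂ * c * h₁⁻¹) := by
          group
      _ = a * (h₂ * c * h₁⁻¹) := by rw [key]
  refine ⟨⟨h₂ * c * h₁⁻¹, hmem⟩, fun j => ?_⟩
  refine Subtype.ext ?_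
  show (h₂ * c * h₁⁻¹) * (h₁ * v₁.1 j.succ * h₁⁻¹) * (h₂ * c * h₁⁻¹)⁻¹
      = h₂ * v₂.1 j.succ * h₂⁻¹
  calc (h₂ * c * h₁⁻¹) * (h₁ * v₁.1 j.succ * h₁⁻¹) * (h₂ * c * h₁⁻¹)⁻¹
      = h₂ * (c * v₁.1 j.succ * c⁻¹) * h₂⁻¹ := by group
    _ = h₂ * v₂.1 j.succ * h₂⁻¹ := by rw [hc j.succ]

end Aux

/-- `c_G(k) = ∑_{i=1}^{l} c_{Z_G(g_i)}(k-1)` where `g_1, …, g_l` are representatives of the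
conjugacy classes of `G`. -/
theorem stmt_5 (G : Type*) [Group G] [Finite G] (k : ℕ) (hk : 2 ≤ k)
    (l : ℕ) (g : Fin l → G) (hrep : ∀ x : G, ∃! i, IsConj (g i) x) :
    commClassCount G k = ∑ i, commClassCount (↥(Subgroup.centralizer {g i})) (k - 1) := by
  obtain ⟨m, rfl⟩ : ∃ m, k = m + 1 := ⟨k - 1, by omega⟩
  simp only [Nat.add_sub_cancel]
  classical
  set Z := fun i => Subgroup.centralizer ({g i} : Set G) with hZ
  let idx : CTup G (m + 1) → Fin l := fun v => (hrep (v.1 0)).exists.choose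
  have idx_spec : ∀ v, IsConj (g (idx v)) (v.1 0) := fun v => (hrep (v.1 0)).exists.choose_spec
  have conjElt : ∀ v : CTup G (m + 1), {h : G // h * v.1 0 * h⁻¹ = g (idx v)} := by
    intro v
    have h1 : IsConj (v.1 0) (g (idx v)) := (idx_spec v).symm
    rw [isConj_iff] at h1
    exact ⟨h1.choose, h1.choose_spec⟩
  let fwd : CTup G (m + 1) → Σ i : Fin l, Quot (CRel (Z i) m) := fun v =>
    ⟨idx v, Quot.mk _ (normTup (g (idx v)) (conjElt v).1 v (conjElt v).2)⟩
  have fwd_eq : ∀ (v : CTup G (m + 1)) (i : Fin l) (h : G) (hv : h * v.1 0 * h⁻¹ = g i),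
      fwd v = ⟨i, Quot.mk _ (normTup (g i) h v hv)⟩ := by
    intro v i h hv
    obtain rfl : i = idx v := by
      refine ((hrep (v.1 0)).unique ?_ (idx_spec v))
      exact (isConj_iff.mpr ⟨h, hv⟩).symm
    show (⟨idx v, _⟩ : Σ i : Fin l, Quot (CRel (Z i) m)) = ⟨idx v, _⟩
    exact congrArg _ (normTup_indep _ _ _ _ _ _ _ ⟨1, fun j => by group⟩)
  have fwd_sound : ∀ v w : CTup G (m + 1), CRel G (m + 1) v w → fwd v = fwd w := by
    intro v w hvw
    obtain ⟨c, hc⟩ := hvw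
    have hv : ((conjElt w).1 * c) * v.1 0 * ((conjElt w).1 * c)⁻¹ = g (idx w) := by
      calc ((conjElt w).1 * c) * v.1 0 * ((conjElt w).1 * c)⁻¹
          = (conjElt w).1 * (c * v.1 0 * c⁻¹) * (conjElt w).1⁻¹ := by group
        _ = (conjElt w).1 * w.1 0 * (conjElt w).1⁻¹ := by rw [hc 0]
        _ = g (idx w) := (conjElt w).2
    rw [fwd_eq v (idx w) ((conjElt w).1 * c) hv]
    show (⟨idx w, _⟩ : Σ i : Fin l, Quot (CRel (Z i) m)) = ⟨idx w, _⟩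
    exact congrArg _ (normTup_indep _ _ _ _ _ _ _ ⟨c, hc⟩)
  -- backward
  have consComm : ∀ (i : Fin l) (u : CTup (Z i) m),
      ∀ a b, Commute ((Fin.cons (g i) (fun j => (u.1 j : G)) : Fin (m+1) → G) a)
        ((Fin.cons (g i) (fun j => (u.1 j : G)) : Fin (m+1) → G) b) := by
    intro i u a b
    have hg : ∀ j, Commute (g i) ((u.1 j : G)) := fun j =>
      ((Subgroup.mem_centralizer_singleton_iff.mp (u.1 j).2)).symm
    refine Fin.cases ?_ ?_ a <;> [skip; intro a'] <;>
      refine Fin.cases ?_ ?_ b <;> simp only [Fin.cons_zero, Fin.cons_succ]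
    · exact Commute.refl _
    · intro b'; exact hg b'
    · exact (hg a').symm
    · intro b'
      exact congrArg Subtype.val (u.2 a' b')
  let consTup : ∀ i : Fin l, CTup (Z i) m → CTup G (m + 1) := fun i u =>
    ⟨Fin.cons (g i) (fun j => (u.1 j : G)), consComm i u⟩
  let bwdRaw : ∀ i : Fin l, CTup (Z i) m → Quot (CRel G (m + 1)) := fun i u =>
    Quot.mk _ (consTup i u)
  have bwd_sound : ∀ i : Fin l, ∀ u u' : CTup (Z i) m, CRel (Z i) m u u' →
      bwdRaw i u = bwdRaw i u' := by
    intro i u u' ⟨c, hc⟩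
    apply Quot.sound
    refine ⟨(c : G), fun j => ?_⟩
    refine Fin.cases ?_ ?_ j
    · show (c : G) * (g i) * (c : G)⁻¹ = g i
      have hcg : (c : G) * g i = g i * (c : G) :=
        Subgroup.mem_centralizer_singleton_iff.mp c.2
      calc (c : G) * (g i) * (c : G)⁻¹ = g i * (c : G) * (c : G)⁻¹ := by rw [hcg]
        _ = g i := by group
    · intro j'
      show (c : G) * (u.1 j' : G) * (c : G)⁻¹ = (u'.1 j' : G)
      exact_mod_cast congrArg Subtype.val (hc j')
  let bwd : (Σ i : Fin l, Quot (CRel (Z i) m)) → Quot (CRel G (m + 1)) := fun p =>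
    Quot.lift (bwdRaw p.1) (bwd_sound p.1) p.2
  let E : Quot (CRel G (m + 1)) ≃ Σ i : Fin l, Quot (CRel (Z i) m) :=
    { toFun := Quot.lift fwd fwd_sound
      invFun := bwd
      left_inv := by
        refine Quot.ind fun v => ?_
        show bwd (fwd v) = Quot.mk _ v
        show Quot.mk _ (consTup (idx v) (normTup _ (conjElt v).1 v (conjElt v).2)) = Quot.mk _ v
        refine Quot.sound ⟨(conjElt v).1⁻¹, fun j => ?_⟩
        refine Fin.cases ?_ ?_ j
        · show (conjElt v).1⁻¹ * (g (idx v)) * ((conjElt v).1⁻¹)⁻¹ = v.1 0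
          calc (conjElt v).1⁻¹ * (g (idx v)) * ((conjElt v).1⁻¹)⁻¹
              = (conjElt v).1⁻¹ * ((conjElt v).1 * v.1 0 * (conjElt v).1⁻¹)
                  * ((conjElt v).1⁻¹)⁻¹ := by rw [(conjElt v).2]
            _ = v.1 0 := by group
        · intro j'
          show (conjElt v).1⁻¹ * ((conjElt v).1 * v.1 j'.succ * (conjElt v).1⁻¹)
              * ((conjElt v).1⁻¹)⁻¹ = v.1 j'.succ
          group
      right_inv := by
        rintro ⟨i, q⟩
        refine Quot.inductionOn q fun u => ?_
        show fwd (consTup i u) = ⟨i, Quot.mk _ u⟩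
        have h0 : (1 : G) * (consTup i u).1 0 * (1 : G)⁻¹ = g i := by
          show (1 : G) * (g i) * (1 : G)⁻¹ = g i; group
        rw [fwd_eq (consTup i u) i 1 h0]
        refine congrArg _ (congrArg _ ?_)
        refine Subtype.ext (funext fun j => Subtype.ext ?_)
        show (1 : G) * (consTup i u).1 j.succ * (1 : G)⁻¹ = (u.1 j : G)
        show (1 : G) * (u.1 j : G) * (1 : G)⁻¹ = (u.1 j : G)
        group }
  have hcard : commClassCount G (m + 1) = Nat.card (Σ i : Fin l, Quot (CRel (Z i) m)) :=
    Nat.card_congr E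
  rw [hcard]
  haveI : ∀ i : Fin l, Fintype (Quot (CRel (Z i) m)) := fun i => Fintype.ofFinite _
  rw [Nat.card_eq_fintype_card, Fintype.card_sigma]
  exact Finset.sum_congr rfl fun i _ => (Nat.card_eq_fintype_card).symm
end

section
/- For any finite group G and integer k ≥ 2, the probability that a uniformly random k-tuple of elements of G pairwise commutes equals c_G(k-1)/|G|^{k-1}; that is, |G^{(k)}| = c_G(k-1)·|G|. -/
open MulAction ConjAct

section

variable (G : Type*) [Group G] (m : ℕ)

def commutingTuples : SubMulAction (ConjAct G) (Fin m → G) where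
  carrier := {v | ∀ i j, Commute (v i) (v j)}
  smul_mem' g _ hv i j := (hv i j).map (MulDistribMulAction.toMonoidHom G g)

variable {G m}

lemma mem_commutingTuples_iff {v : Fin m → G} :
    v ∈ commutingTuples G m ↔ ∀ i j, Commute (v i) (v j) := Iff.rfl

lemma cons_mem_commutingTuples_iff {g : G} {v : Fin m → G} :
    Fin.cons g v ∈ commutingTuples G (m + 1) ↔
      (∀ i, Commute g (v i)) ∧ v ∈ commutingTuples G m := by
  simp only [mem_commutingTuples_iff, Fin.forall_fin_succ, Fin.cons_zero, Fin.cons_succ,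
    Commute.refl, true_and, forall_and]
  exact and_iff_right_of_imp fun h i => (h.1 i).symm

lemma mem_fixedBy_commutingTuples_iff {g : ConjAct G} {v : commutingTuples G m} :
    v ∈ fixedBy (commutingTuples G m) g ↔ ∀ i, Commute (ofConjAct g) (v.1 i) := by
  simp only [mem_fixedBy, Subtype.ext_iff, SubMulAction.val_smul, funext_iff, Pi.smul_apply,
    smul_def, mul_inv_eq_iff_eq_mul, ← commute_iff_eq]

variable (G m)

def commutingTuplesSuccEquiv :
    commutingTuples G (m + 1) ≃ Σ g : ConjAct G, fixedBy (commutingTuples G m) g where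
  toFun w :=
    have hw := cons_mem_commutingTuples_iff.1 (Fin.cons_self_tail w.1 ▸ w.2)
    ⟨toConjAct (w.1 0), ⟨Fin.tail w.1, hw.2⟩, mem_fixedBy_commutingTuples_iff.2 hw.1⟩
  invFun p := ⟨Fin.cons (ofConjAct p.1) p.2.1.1,
    cons_mem_commutingTuples_iff.2 ⟨mem_fixedBy_commutingTuples_iff.1 p.2.2, p.2.1.2⟩⟩
  left_inv w := Subtype.ext (Fin.cons_self_tail w.1)
  right_inv _ := rfl

lemma commClassCount_eq_card_orbits :
    commClassCount G m = Nat.card (orbitRel.Quotient (ConjAct G) (commutingTuples G m)) := by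
  refine Nat.card_congr (Quot.congrRight fun (v w : commutingTuples G m) => ?_)
  rw [Setoid.comm', orbitRel_apply, mem_orbit_iff, toConjAct.surjective.exists]
  simp only [Subtype.ext_iff, SubMulAction.val_smul, funext_iff, Pi.smul_apply, toConjAct_smul]

end

theorem stmt_6_general (G : Type*) [Group G] (k : ℕ) (hk : 2 ≤ k) :
    Nat.card {v : Fin k → G // ∀ i j, Commute (v i) (v j)} =
      commClassCount G (k - 1) * Nat.card G := by
  obtain ⟨m, rfl⟩ : ∃ m, k = m + 1 := ⟨k - 1, by omega⟩
  rw [Nat.add_sub_cancel, commClassCount_eq_card_orbits, ← Nat.card_prod]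
  calc Nat.card (commutingTuples G (m + 1))
      = Nat.card (Σ g : ConjAct G, fixedBy (commutingTuples G m) g) :=
        Nat.card_congr (commutingTuplesSuccEquiv G m)
    _ = Nat.card (orbitRel.Quotient (ConjAct G) (commutingTuples G m) × ConjAct G) :=
        Nat.card_congr (sigmaFixedByEquivOrbitsProdGroup _ _)

/-- `|G^{(k)}| = c_G(k-1)·|G|`, i.e. the probability that a uniformly random `k`-tuple of
elements of `G` pairwise commutes equals `c_G(k-1)/|G|^{k-1}`. -/
theorem stmt_6 (G : Type*) [Group G] [Finite G] (k : ℕ) (hk : 2 ≤ k) :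
    Nat.card {v : Fin k → G // ∀ i j, Commute (v i) (v j)} =
      commClassCount G (k - 1) * Nat.card G :=
  stmt_6_general G k hk
end

section
/- The number of conjugacy classes of SL_2(F_q), for q an odd prime power, equals q + 4. -/
/-!
The trace is a class function on `SL₂(F)`. If `t ≠ ±2`, every `A` of trace `t` is conjugate
to the companion matrix `C = !![0, -1; 1, t]`: a vector `v` with `v, A v` independent gives
`P` with `P C = A P`, and `det P` is corrected to `1` by an element `x + y C` of the
centralizer of `C`, since the norm form `x² + t x y + y²` is surjective over a finite field.
If `t = 2 s` with `s = ±1`, the classes are `s I` and `!![s, l; 0, s]` with `l ≠ 0` up to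
squares, i.e. three classes. Hence there are `(q - 2) + 2 · 3 = q + 4` classes.
-/

open Matrix
open scoped MatrixGroups

namespace Matrix.SpecialLinearGroup

variable {n R : Type*} [Fintype n] [DecidableEq n] [CommRing R]

local notation:1024 "↑ₘ" A:1024 => ((A : SpecialLinearGroup n R) : Matrix n n R)

theorem trace_conj (c A : SpecialLinearGroup n R) :
    trace ↑ₘ(c * A * c⁻¹) = trace ↑ₘA := by
  rw [coe_mul, trace_mul_comm, ← coe_mul, inv_mul_cancel_left]

theorem trace_eq_of_isConj {A B : SpecialLinearGroup n R} (h : IsConj A B) :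
    trace ↑ₘA = trace ↑ₘB := by
  obtain ⟨c, rfl⟩ := isConj_iff.mp h
  exact (trace_conj c A).symm

noncomputable def conjClassesTrace : ConjClasses (SpecialLinearGroup n R) → R :=
  Quotient.lift (fun A => trace ↑ₘA) fun _ _ => trace_eq_of_isConj

theorem conjClassesTrace_mk (A : SpecialLinearGroup n R) :
    conjClassesTrace (ConjClasses.mk A) = trace ↑ₘA := rfl

theorem isConj_iff_exists_det_eq_one {A B : SpecialLinearGroup n R} :
    IsConj A B ↔ ∃ P : Matrix n n R, P.det = 1 ∧ P * ↑ₘA = ↑ₘB * P := by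
  rw [isConj_iff]
  constructor
  · rintro ⟨c, rfl⟩
    exact ⟨c, c.2, by rw [← coe_mul, ← coe_mul, inv_mul_cancel_right]⟩
  · rintro ⟨P, hP, hPAB⟩
    exact ⟨⟨P, hP⟩, mul_inv_eq_of_eq_mul (Subtype.ext hPAB)⟩

end Matrix.SpecialLinearGroup

theorem FiniteField.isSquare_div_of_not_isSquare {F : Type*} [Field F] [Fintype F]
    {a b : F} (ha : ¬IsSquare a) (hb : ¬IsSquare b) : IsSquare (a / b) := by
  classical
  have hb0 : b ≠ 0 := by rintro rfl; exact hb IsSquare.zero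
  have ha0 : a ≠ 0 := by rintro rfl; exact ha IsSquare.zero
  rw [← quadraticChar_one_iff_isSquare (div_ne_zero ha0 hb0)]
  have h := congrArg (quadraticChar F) (div_mul_cancel₀ a hb0)
  rw [map_mul, quadraticChar_neg_one_iff_not_isSquare.mpr ha,
    quadraticChar_neg_one_iff_not_isSquare.mpr hb] at h
  linarith

open Polynomial in
theorem FiniteField.exists_sq_add_mul_add_sq_eq {F : Type*} [Field F] [Fintype F]
    (hF : ringChar F ≠ 2) {t : F} (ht : t ^ 2 ≠ 4) (c : F) :
    ∃ x y : F, x ^ 2 + t * x * y + y ^ 2 = c := by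
  have h2 : (2 : F) ≠ 0 := Ring.two_ne_zero hF
  -- `4 (x² + t x y + y²) = (2x + t y)² - (t² - 4) y²`
  obtain ⟨u, v, huv⟩ := FiniteField.exists_root_sum_quadratic
    (f := X ^ 2 - C (4 * c)) (g := C (4 - t ^ 2) * X ^ 2)
    (degree_X_pow_sub_C two_pos _)
    (degree_C_mul_X_pow 2 (sub_ne_zero.mpr (Ne.symm ht)))
    (FiniteField.odd_card_of_char_ne_two hF)
  simp only [eval_sub, eval_mul, eval_pow, eval_X, eval_C] at huv
  refine ⟨(u - t * v) / 2, v, ?_⟩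
  field_simp
  linear_combination huv

namespace SL2

open Matrix.SpecialLinearGroup

variable {F : Type*} [Field F]

local notation:1024 "↑ₘ" A:1024 => ((A : SL(2, F)) : Matrix (Fin 2) (Fin 2) F)

theorem exists_coe_eq_of (A : SL(2, F)) :
    ∃ a b c d : F, a * d - b * c = 1 ∧ ↑ₘA = !![a, b; c, d] :=
  ⟨_, _, _, _, by rw [← det_fin_two, A.2], eta_fin_two _⟩

def companion (t : F) : SL(2, F) :=
  ⟨!![0, -1; 1, t], by simp [det_fin_two_of]⟩

def jordan (s l : F) (hs : s ^ 2 = 1) : SL(2, F) :=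
  ⟨!![s, l; 0, s], by simp [det_fin_two_of, ← sq, hs]⟩

theorem trace_companion (t : F) : trace ↑ₘ(companion t) = t := by
  simp [companion, trace_fin_two]

theorem trace_jordan (s l : F) (hs : s ^ 2 = 1) : trace ↑ₘ(jordan s l hs) = 2 * s := by
  simp [jordan, trace_fin_two, two_mul]

/-- The matrix with columns `v` and `A v` intertwines `A` with its companion matrix
(Cayley–Hamilton). -/
theorem cyclic_mul_companion {a b c d : F} (h : a * d - b * c = 1) (v₀ v₁ : F) :
    !![v₀, a * v₀ + b * v₁; v₁, c * v₀ + d * v₁] * ↑ₘ(companion (a + d))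
      = !![a, b; c, d] * !![v₀, a * v₀ + b * v₁; v₁, c * v₀ + d * v₁] := by
  simp only [companion, coe_mk, mul_fin_two, EmbeddingLike.apply_eq_iff_eq, vecCons_inj, and_true]
  refine ⟨⟨?_, ?_⟩, ?_, ?_⟩
  · ring
  · linear_combination v₀ * h
  · ring
  · linear_combination v₁ * h

theorem exists_det_ne_zero_mul_companion_eq (A : SL(2, F)) (hA : trace ↑ₘA ^ 2 ≠ 4) :
    ∃ P : Matrix (Fin 2) (Fin 2) F,
      P.det ≠ 0 ∧ P * ↑ₘ(companion (trace ↑ₘA)) = ↑ₘA * P := by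
  obtain ⟨a, b, c, d, h, hA'⟩ := exists_coe_eq_of A
  rw [hA', trace_fin_two_of] at hA ⊢
  suffices ∃ v₀ v₁ : F, v₀ * (c * v₀ + d * v₁) - (a * v₀ + b * v₁) * v₁ ≠ 0 by
    obtain ⟨v₀, v₁, hv⟩ := this
    exact ⟨_, by rwa [det_fin_two_of], cyclic_mul_companion h v₀ v₁⟩
  by_cases hc : c = 0
  · by_cases hb : b = 0
    · refine ⟨1, 1, fun had => hA ?_⟩
      subst hb hc
      linear_combination (d - a) * had + 4 * h
    · exact ⟨0, 1, by simpa using hb⟩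
  · exact ⟨1, 0, by simpa using hc⟩

theorem det_smul_one_add_smul_companion (x y t : F) :
    det (x • 1 + y • ↑ₘ(companion t)) = x ^ 2 + t * x * y + y ^ 2 := by
  simp only [companion, coe_mk, one_fin_two, smul_of, smul_cons, smul_empty, of_add_of,
    cons_add_cons, empty_add_empty, smul_eq_mul, det_fin_two_of]
  ring

theorem exists_isConj_jordan (A : SL(2, F)) {s : F} (hs : s ^ 2 = 1)
    (hA : trace ↑ₘA = 2 * s) : ∃ l, IsConj (jordan s l hs) A := by
  obtain ⟨a, b, c, d, h, hA'⟩ := exists_coe_eq_of A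
  rw [hA', trace_fin_two_of] at hA
  by_cases hc : c = 0
  · subst hc
    have hd : d = s := by
      have : (d - s) ^ 2 = 0 := by linear_combination d * hA - h + hs
      exact sub_eq_zero.mp (pow_eq_zero_iff two_ne_zero |>.mp this)
    have ha : a = s := by linear_combination hA - hd
    have hJ : jordan s b hs = A := Subtype.ext (by rw [hA', ha, hd]; rfl)
    exact ⟨b, hJ ▸ IsConj.refl _⟩
  · -- the first column of `P` is the eigenvector `(s - a, -c) / c` of `A`
    refine ⟨-c, isConj_iff_exists_det_eq_one.mpr
      ⟨!![(s - a) * c⁻¹, 1; -1, 0], by simp [det_fin_two_of], ?_⟩⟩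
    rw [hA']
    simp only [jordan, coe_mk, mul_fin_two, EmbeddingLike.apply_eq_iff_eq, vecCons_inj, and_true]
    refine ⟨⟨?_, ?_⟩, ?_, ?_⟩
    · field_simp
      linear_combination hs - h + a * hA
    · field_simp
      ring
    · field_simp
      linear_combination hA
    · ring

theorem jordan_zero_mem_center {s : F} (hs : s ^ 2 = 1) :
    jordan s 0 hs ∈ Subgroup.center SL(2, F) :=
  mem_center_iff.mpr ⟨s, by simpa using hs, by
    ext i j
    fin_cases i <;> fin_cases j <;> simp [jordan]⟩

theorem isConj_jordan_zero_iff {s l : F} (hs : s ^ 2 = 1) :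
    IsConj (jordan s 0 hs) (jordan s l hs) ↔ l = 0 := by
  refine ⟨fun h => ?_, fun h => h ▸ IsConj.refl _⟩
  have h01 := congrArg (fun A : SL(2, F) => ↑ₘA 0 1)
    (h.eq_of_left_mem_center (jordan_zero_mem_center hs))
  exact h01.symm

theorem isConj_jordan_iff {s a b : F} (hs : s ^ 2 = 1) (ha : a ≠ 0) (hb : b ≠ 0) :
    IsConj (jordan s a hs) (jordan s b hs) ↔ IsSquare (b / a) := by
  rw [isConj_iff_exists_det_eq_one]
  constructor
  · rintro ⟨P, hP, hPJ⟩
    rw [eta_fin_two P] at hP hPJ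
    simp only [jordan, coe_mk, mul_fin_two, EmbeddingLike.apply_eq_iff_eq, vecCons_inj,
      and_true] at hPJ
    obtain ⟨⟨h00, h01⟩, -⟩ := hPJ
    rw [det_fin_two_of] at hP
    refine ⟨P 0 0, (div_eq_iff ha).mpr ?_⟩
    linear_combination -b * hP - P 0 0 * h01 + P 0 1 * h00
  · rintro ⟨r, hr⟩
    have hr0 : r ≠ 0 := by rintro rfl; simp [hb, ha] at hr
    refine ⟨!![r, 0; 0, r⁻¹], by simp [det_fin_two_of, hr0], ?_⟩
    simp only [jordan, coe_mk, mul_fin_two, EmbeddingLike.apply_eq_iff_eq, vecCons_inj, and_true]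
    refine ⟨⟨?_, ?_⟩, ?_, ?_⟩
    · ring
    · field_simp
      linear_combination -(div_eq_iff ha).mp hr
    · ring
    · ring

variable [Fintype F]

theorem isConj_companion (hF : ringChar F ≠ 2) (A : SL(2, F))
    (hA : trace ↑ₘA ^ 2 ≠ 4) : IsConj (companion (trace ↑ₘA)) A := by
  obtain ⟨P, hP, hPA⟩ := exists_det_ne_zero_mul_companion_eq A hA
  obtain ⟨x, y, hxy⟩ := FiniteField.exists_sq_add_mul_add_sq_eq hF hA (P.det)⁻¹
  set C := ↑ₘ(companion (trace ↑ₘA))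
  have hN : Commute (x • 1 + y • C) C :=
    ((Commute.one_left C).smul_left x).add_left ((Commute.refl C).smul_left y)
  refine isConj_iff_exists_det_eq_one.mpr ⟨P * (x • 1 + y • C), ?_, ?_⟩
  · rw [det_mul, det_smul_one_add_smul_companion, hxy, mul_inv_cancel₀ hP]
  · rw [mul_assoc, hN.eq, ← mul_assoc, hPA, mul_assoc]

theorem setOf_conjClassesTrace_eq_of_sq_ne_four (hF : ringChar F ≠ 2) {t : F} (ht : t ^ 2 ≠ 4) :
    {x : ConjClasses SL(2, F) | conjClassesTrace x = t} = {ConjClasses.mk (companion t)} := by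
  ext x
  obtain ⟨A, rfl⟩ := ConjClasses.mk_surjective x
  simp only [Set.mem_ofPred_eq, Set.mem_singleton_iff, conjClassesTrace_mk,
    ConjClasses.mk_eq_mk_iff_isConj]
  constructor
  · rintro rfl
    exact (isConj_companion hF A ht).symm
  · intro h
    rw [trace_eq_of_isConj h, trace_companion]

theorem setOf_conjClassesTrace_eq_two_mul {s : F} (hs : s ^ 2 = 1) {η : F} (hη : ¬IsSquare η) :
    {x : ConjClasses SL(2, F) | conjClassesTrace x = 2 * s} =
      {ConjClasses.mk (jordan s 0 hs), ConjClasses.mk (jordan s 1 hs),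
        ConjClasses.mk (jordan s η hs)} := by
  have hη0 : η ≠ 0 := by rintro rfl; exact hη IsSquare.zero
  ext x
  obtain ⟨A, rfl⟩ := ConjClasses.mk_surjective x
  simp only [Set.mem_ofPred_eq, Set.mem_insert_iff, Set.mem_singleton_iff, conjClassesTrace_mk,
    ConjClasses.mk_eq_mk_iff_isConj]
  constructor
  · intro hA
    obtain ⟨l, hl⟩ := exists_isConj_jordan A hs hA
    by_cases hl0 : l = 0
    · exact .inl (hl0 ▸ hl).symm
    by_cases hsq : IsSquare l
    · refine .inr (.inl (IsConj.symm ?_))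
      exact ((isConj_jordan_iff hs one_ne_zero hl0).mpr (by simpa using hsq)).trans hl
    · refine .inr (.inr (IsConj.symm ?_))
      exact ((isConj_jordan_iff hs hη0 hl0).mpr
        (FiniteField.isSquare_div_of_not_isSquare hsq hη)).trans hl
  · rintro (h | h | h) <;> rw [trace_eq_of_isConj h, trace_jordan]

theorem ncard_setOf_conjClassesTrace_eq_two_mul (hF : ringChar F ≠ 2) {s : F} (hs : s ^ 2 = 1) :
    {x : ConjClasses SL(2, F) | conjClassesTrace x = 2 * s}.ncard = 3 := by
  obtain ⟨η, hη⟩ := FiniteField.exists_nonsquare hF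
  have hη0 : η ≠ 0 := by rintro rfl; exact hη IsSquare.zero
  rw [setOf_conjClassesTrace_eq_two_mul hs hη, Set.ncard_eq_three]
  refine ⟨_, _, _, ?_, ?_, ?_, rfl⟩ <;> rw [Ne, ConjClasses.mk_eq_mk_iff_isConj]
  · exact (isConj_jordan_zero_iff hs).not.mpr one_ne_zero
  · exact (isConj_jordan_zero_iff hs).not.mpr hη0
  · exact (isConj_jordan_iff hs one_ne_zero hη0).not.mpr (by simpa using hη)

theorem card_conjClasses (hF : ringChar F ≠ 2) :
    Nat.card (ConjClasses SL(2, F)) = Fintype.card F + 4 := by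
  classical
  have h2 : (2 : F) ≠ -2 := fun h =>
    Ring.two_ne_zero hF ((Ring.eq_self_iff_eq_zero_of_char_ne_two hF).mp h.symm)
  have hfiber (t : F) : Nat.card {x : ConjClasses SL(2, F) // conjClassesTrace x = t} =
      1 + (if t = 2 then 2 else 0) + (if t = -2 then 2 else 0) := by
    change Nat.card {x | conjClassesTrace x = t} = _
    rw [Nat.card_coe_set_eq]
    rcases eq_or_ne (t ^ 2) (2 ^ 2) with ht | ht
    · obtain rfl | rfl := sq_eq_sq_iff_eq_or_eq_neg.mp ht
      · simpa [h2] using ncard_setOf_conjClassesTrace_eq_two_mul hF (one_pow 2)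
      · simpa [h2.symm] using ncard_setOf_conjClassesTrace_eq_two_mul hF (s := -1) (by norm_num)
    · obtain ⟨ht₁, ht₂⟩ := not_or.mp (mt sq_eq_sq_iff_eq_or_eq_neg.mpr ht)
      have ht' : t ^ 2 ≠ 4 := by norm_num at ht; exact ht
      rw [setOf_conjClassesTrace_eq_of_sq_ne_four hF ht', Set.ncard_singleton]
      simp [ht₁, ht₂]
  rw [Nat.card_congr (Equiv.sigmaFiberEquiv conjClassesTrace).symm, Nat.card_sigma]
  simp only [hfiber, Finset.sum_add_distrib, Finset.sum_const, Finset.card_univ, smul_eq_mul,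
    mul_one, Finset.sum_ite_eq', Finset.mem_univ, if_true]

end SL2

theorem stmt_14_general (q : ℕ) (hodd : Odd q)
    (F : Type*) [Field F] [Fintype F] (hF : Fintype.card F = q) :
    Nat.card (ConjClasses (Matrix.SpecialLinearGroup (Fin 2) F)) = q + 4 := by
  have hchar : ringChar F ≠ 2 := by
    rw [Ne, FiniteField.even_card_iff_char_two, hF, ← Nat.even_iff, Nat.not_even_iff_odd]
    exact hodd
  rw [SL2.card_conjClasses hchar, hF]

/-- The number of conjugacy classes of `SL_2(F_q)`, for `q` an odd prime power,
equals `q + 4`. -/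
theorem stmt_14 (q : ℕ) (hq : IsPrimePow q) (hodd : Odd q)
    (F : Type*) [Field F] [Fintype F] (hF : Fintype.card F = q) :
    Nat.card (ConjClasses (Matrix.SpecialLinearGroup (Fin 2) F)) = q + 4 :=
  stmt_14_general q hodd F hF
end

section
/- Let A = [[a_0, 0, 1, 0],[0, a_0, 0, -1],[0,0,a_0,0],[0,0,0,a_0]] with a_0 = ±1, an element of Sp_4(F_q) with respect to β = [[0,I_2],[-I_2,0]]. Then the centralizer of A in Sp_4(F_q) equals { [[C, D·ᵗC^{-1}],[0, ΔCΔ]] : D = ᵗD, C Δ ᵗC = Δ } where Δ = diag(1,-1); in particular the C occurring are exactly the elements of the split orthogonal group O_2^+(F_q). -/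
/-! Commuting with `A` forces `g` to be block upper triangular with lower-right block `Δ C Δ`,
since `Δ² = 1`. For such a block matrix the symplectic condition splits into `C ᵗQ = Q ᵗC` and
`C ᵗ(Δ C Δ) = 1`; the latter says `C Δ ᵗC = Δ`, so `C` is invertible and the former says exactly
that `D := Q ᵗC` is symmetric. -/

open Matrix

/-- `g` is symplectic with respect to the skew-symmetric form `β` if `g β ᵗg = β`. -/
def IsSymplectic {m : Type*} [Fintype m] [DecidableEq m] {F : Type*} [Field F]
    (β : Matrix m m F) (g : GL m F) : Prop :=
  (g : Matrix m m F) * β * (g : Matrix m m F)ᵀ = β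

namespace Matrix

variable {n R : Type*} [Fintype n] [DecidableEq n] [CommRing R] {Δ : Matrix n n R}

theorem fromBlocks_commute_unipotent_iff (hΔ : Δ * Δ = 1) (a : R)
    (P Q S T : Matrix n n R) :
    fromBlocks P Q S T * fromBlocks (a • 1) Δ 0 (a • 1) =
        fromBlocks (a • 1) Δ 0 (a • 1) * fromBlocks P Q S T ↔
      S = 0 ∧ T = Δ * P * Δ := by
  have cancel_left {X Y : Matrix n n R} : Δ * X = Δ * Y ↔ X = Y :=
    ⟨fun h => by simpa [← Matrix.mul_assoc, hΔ] using congrArg (Δ * ·) h,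
      fun h => h ▸ rfl⟩
  simp only [fromBlocks_multiply, fromBlocks_inj, Matrix.mul_smul, Matrix.smul_mul,
    Matrix.mul_one, Matrix.one_mul, Matrix.mul_zero, Matrix.zero_mul, add_zero, zero_add]
  constructor
  · rintro ⟨h11, h12, -, -⟩
    refine ⟨cancel_left.1 ?_, cancel_left.1 ?_⟩
    · simpa using h11.symm
    · rw [← Matrix.mul_assoc, ← Matrix.mul_assoc, hΔ, Matrix.one_mul]
      exact (add_right_cancel (h12.trans (add_comm _ _))).symm
  · rintro ⟨rfl, rfl⟩
    refine ⟨by simp, ?_, by simp, by simp⟩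
    rw [add_comm, ← Matrix.mul_assoc, ← Matrix.mul_assoc, hΔ, Matrix.one_mul]

theorem fromBlocks_upper_symplectic_iff (P Q T : Matrix n n R) :
    fromBlocks P Q 0 T * fromBlocks 0 1 (-1) 0 * (fromBlocks P Q 0 T)ᵀ =
        fromBlocks 0 1 (-1) 0 ↔
      P * Qᵀ = Q * Pᵀ ∧ P * Tᵀ = 1 := by
  simp only [fromBlocks_transpose, fromBlocks_multiply, fromBlocks_inj, transpose_zero,
    Matrix.mul_zero, Matrix.zero_mul, Matrix.mul_one, Matrix.mul_neg, Matrix.neg_mul,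
    add_zero, zero_add, and_true]
  constructor
  · rintro ⟨h11, h12, -⟩
    exact ⟨(neg_add_eq_zero.1 h11).symm, h12⟩
  · rintro ⟨hsymm, hPT⟩
    refine ⟨by rw [hsymm, neg_add_cancel], hPT, ?_⟩
    rw [← transpose_transpose (T * Pᵀ), transpose_mul, transpose_transpose, hPT, transpose_one]

theorem mul_transpose_conj_eq_one_iff (hΔ : Δ * Δ = 1) (hΔt : Δᵀ = Δ) (C : Matrix n n R) :
    C * (Δ * C * Δ)ᵀ = 1 ↔ C * Δ * Cᵀ = Δ := by
  rw [transpose_mul, transpose_mul, hΔt]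
  constructor
  · intro h
    calc C * Δ * Cᵀ = C * (Δ * (Cᵀ * Δ)) * Δ := by
          simp only [Matrix.mul_assoc, hΔ, Matrix.mul_one]
      _ = Δ := by rw [h, Matrix.one_mul]
  · intro h
    calc C * (Δ * (Cᵀ * Δ)) = C * Δ * Cᵀ * Δ := by simp only [Matrix.mul_assoc]
      _ = 1 := by rw [h, hΔ]

theorem isUnit_det_of_mul_mul_transpose_eq (hΔ : Δ * Δ = 1) {C : Matrix n n R}
    (hC : C * Δ * Cᵀ = Δ) : IsUnit C.det :=
  isUnit_det_of_right_inverse (B := Δ * Cᵀ * Δ) <| by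
    rw [← Matrix.mul_assoc, ← Matrix.mul_assoc, hC, hΔ]

theorem mul_transpose_comm_iff_exists_symm {C : Matrix n n R} (hC : IsUnit C.det)
    (Q : Matrix n n R) :
    C * Qᵀ = Q * Cᵀ ↔ ∃ D : Matrix n n R, D = Dᵀ ∧ Q = D * (Cᵀ)⁻¹ := by
  have hCt : IsUnit Cᵀ.det := by rwa [det_transpose]
  constructor
  · intro h
    refine ⟨Q * Cᵀ, by rw [transpose_mul, transpose_transpose, h], ?_⟩
    rw [mul_nonsing_inv_cancel_right _ _ hCt]
  · rintro ⟨D, hD, rfl⟩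
    rw [transpose_mul, transpose_nonsing_inv, transpose_transpose, ← hD,
      nonsing_inv_mul_cancel_right _ _ hCt, ← Matrix.mul_assoc, mul_nonsing_inv _ hC,
      Matrix.one_mul]

theorem symplectic_commute_unipotent_iff (hΔ : Δ * Δ = 1) (hΔt : Δᵀ = Δ) (a : R)
    (M : Matrix (n ⊕ n) (n ⊕ n) R) :
    (M * fromBlocks 0 1 (-1) 0 * Mᵀ = fromBlocks 0 1 (-1) 0 ∧
        M * fromBlocks (a • 1) Δ 0 (a • 1) = fromBlocks (a • 1) Δ 0 (a • 1) * M) ↔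
      ∃ C D : Matrix n n R, D = Dᵀ ∧ C * Δ * Cᵀ = Δ ∧
        M = fromBlocks C (D * (Cᵀ)⁻¹) 0 (Δ * C * Δ) := by
  obtain ⟨P, Q, S, T, rfl⟩ : ∃ P Q S T, M = fromBlocks P Q S T :=
    ⟨_, _, _, _, (fromBlocks_toBlocks M).symm⟩
  rw [fromBlocks_commute_unipotent_iff hΔ]
  constructor
  · rintro ⟨hsympl, hS, hT⟩
    rw [hS, hT, fromBlocks_upper_symplectic_iff, mul_transpose_conj_eq_one_iff hΔ hΔt] at hsympl
    obtain ⟨hQ, hC⟩ := hsympl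
    obtain ⟨D, hD, hQD⟩ := (mul_transpose_comm_iff_exists_symm
      (isUnit_det_of_mul_mul_transpose_eq hΔ hC) _).1 hQ
    exact ⟨_, D, hD, hC, by rw [hS, hT, ← hQD]⟩
  · rintro ⟨C, D, hD, hC, hM⟩
    obtain ⟨rfl, rfl, rfl, rfl⟩ := fromBlocks_inj.1 hM
    refine ⟨?_, rfl, rfl⟩
    rw [fromBlocks_upper_symplectic_iff, mul_transpose_conj_eq_one_iff hΔ hΔt,
      mul_transpose_comm_iff_exists_symm (isUnit_det_of_mul_mul_transpose_eq hΔ hC)]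
    exact ⟨⟨D, hD, rfl⟩, hC⟩

end Matrix

theorem stmt_17_general
    (F : Type*) [Field F]
    (a0 : F)
    (A : GL (Fin 2 ⊕ Fin 2) F)
    (hA : (A : Matrix (Fin 2 ⊕ Fin 2) (Fin 2 ⊕ Fin 2) F) =
      Matrix.fromBlocks (a0 • (1 : Matrix (Fin 2) (Fin 2) F)) (!![1, 0; 0, -1]) 0
        (a0 • (1 : Matrix (Fin 2) (Fin 2) F))) :
    {g : GL (Fin 2 ⊕ Fin 2) F |
        IsSymplectic (Matrix.fromBlocks 0 (1 : Matrix (Fin 2) (Fin 2) F) (-1) 0) g ∧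
        g * A = A * g} =
      {g : GL (Fin 2 ⊕ Fin 2) F | ∃ C D : Matrix (Fin 2) (Fin 2) F,
        D = Dᵀ ∧ C * !![1, 0; 0, -1] * Cᵀ = !![1, 0; 0, -1] ∧
        (g : Matrix (Fin 2 ⊕ Fin 2) (Fin 2 ⊕ Fin 2) F) =
          Matrix.fromBlocks C (D * (Cᵀ)⁻¹) 0
            (!![1, 0; 0, -1] * C * !![1, 0; 0, -1])} := by
  have hΔ : (!![1, 0; 0, -1] : Matrix (Fin 2) (Fin 2) F) * !![1, 0; 0, -1] = 1 := by
    simp [one_fin_two]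
  have hΔt : (!![1, 0; 0, -1] : Matrix (Fin 2) (Fin 2) F)ᵀ = !![1, 0; 0, -1] := by
    ext i j; fin_cases i <;> fin_cases j <;> rfl
  ext g
  rw [Set.mem_ofPred_eq, Set.mem_ofPred_eq, IsSymplectic, Units.ext_iff, Units.val_mul,
    Units.val_mul, hA]
  exact symplectic_commute_unipotent_iff hΔ hΔt a0 _

/-- The centralizer in `Sp_4(F_q)` (form `β = [[0,I₂],[-I₂,0]]`) of
`A = [[a₀I₂, Δ],[0, a₀I₂]]` with `a₀ = ±1` and `Δ = diag(1,-1)` is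
`{ [[C, D·ᵗC⁻¹],[0, ΔCΔ]] : D = ᵗD, C Δ ᵗC = Δ }`; in particular the `C` occurring
are exactly the elements of the split orthogonal group `O₂⁺(F_q)`. -/
theorem stmt_17 (q : ℕ) (hq : IsPrimePow q) (hodd : Odd q)
    (F : Type*) [Field F] [Fintype F] (hF : Fintype.card F = q)
    (a0 : F) (ha0 : a0 = 1 ∨ a0 = -1)
    (A : GL (Fin 2 ⊕ Fin 2) F)
    (hA : (A : Matrix (Fin 2 ⊕ Fin 2) (Fin 2 ⊕ Fin 2) F) =
      Matrix.fromBlocks (a0 • (1 : Matrix (Fin 2) (Fin 2) F)) (!![1, 0; 0, -1]) 0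
        (a0 • (1 : Matrix (Fin 2) (Fin 2) F))) :
    {g : GL (Fin 2 ⊕ Fin 2) F |
        IsSymplectic (Matrix.fromBlocks 0 (1 : Matrix (Fin 2) (Fin 2) F) (-1) 0) g ∧
        g * A = A * g} =
      {g : GL (Fin 2 ⊕ Fin 2) F | ∃ C D : Matrix (Fin 2) (Fin 2) F,
        D = Dᵀ ∧ C * !![1, 0; 0, -1] * Cᵀ = !![1, 0; 0, -1] ∧
        (g : Matrix (Fin 2 ⊕ Fin 2) (Fin 2 ⊕ Fin 2) F) =
          Matrix.fromBlocks C (D * (Cᵀ)⁻¹) 0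
            (!![1, 0; 0, -1] * C * !![1, 0; 0, -1])} :=
  stmt_17_general F a0 A hA
end
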